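/- arXiv:1811.01442 — 6 statements merged into one kernel-verified Lean document; each statement's English description precedes it below -/
import Mathlib

section
/- For the Huber function g with parameter τ > 0 (g(x) = x²/2 for |x| ≤ τ, g(x) = τ(|x|-τ/2) otherwise) and any t ≥ 1 real numbers x_1, ..., x_t, one has g(x_1 + ... + x_t) ≤ 2t · (g(x_1) + ... + g(x_t)). -/
theorem stmt_2 (τ : ℝ) (hτ : 0 < τ)
    (g : ℝ → ℝ)
    (hg : ∀ x : ℝ, g x = if |x| ≤ τ then x ^ 2 / 2 else τ * (|x| - τ / 2))
    (t : ℕ) (ht : 1 ≤ t) (x : Fin t → ℝ) :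
    g (∑ i, x i) ≤ 2 * t * ∑ i, g (x i) := by
  set S := ∑ i, x i with hS
  set a : Fin t → ℝ := fun i => |x i| with ha
  set m : Fin t → ℝ := fun i => min (a i) τ with hm
  have hm_nonneg : ∀ i, 0 ≤ m i := fun i => le_min (abs_nonneg _) hτ.le
  -- Step 1 : g S ≤ |S| * min |S| τ
  have step1 : g S ≤ |S| * min |S| τ := by
    rw [hg]
    split_ifs with h
    · rw [min_eq_left h]
      nlinarith [abs_nonneg S, sq_abs S]
    · push_neg at h
      rw [min_eq_right h.le]
      nlinarith
  -- Step 2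
  have step2 : |S| ≤ ∑ i, a i := Finset.abs_sum_le_sum_abs _ _
  -- Step 3 : min |S| τ ≤ ∑ m
  have step3 : min |S| τ ≤ ∑ i, m i := by
    by_cases hc : ∃ i, τ ≤ a i
    · obtain ⟨i, hi⟩ := hc
      calc min |S| τ ≤ τ := min_le_right _ _
        _ = m i := by simp [hm, min_eq_right hi]
        _ ≤ ∑ j, m j := Finset.single_le_sum (fun j _ => hm_nonneg j) (Finset.mem_univ i)
    · push_neg at hc
      have : ∀ i, m i = a i := fun i => min_eq_left (hc i).le
      simp only [this]
      exact (min_le_left _ _).trans step2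
  -- Step 4 : Chebyshev
  have hmono : Monovary a m := by
    intro i j hij
    by_contra h
    push_neg at h
    exact absurd (min_le_min h.le le_rfl) (not_le.2 hij)
  have cheb : (∑ i, a i) * ∑ i, m i ≤ t * ∑ i, a i * m i := by
    simpa using hmono.sum_mul_sum_le_card_mul_sum
  -- Step 5 : a i * m i ≤ 2 * g (x i)
  have step5 : ∀ i, a i * m i ≤ 2 * g (x i) := by
    intro i
    rw [hg]
    split_ifs with h
    · have : m i = a i := min_eq_left h
      rw [this]
      have : a i * a i = x i ^ 2 := by rw [ha]; simp [sq_abs, sq]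
      nlinarith
    · push_neg at h
      have : m i = τ := min_eq_right h.le
      rw [this]
      nlinarith
  have hgnn : 0 ≤ ∑ i, a i := Finset.sum_nonneg fun i _ => abs_nonneg _
  calc g S ≤ |S| * min |S| τ := step1
    _ ≤ (∑ i, a i) * ∑ i, m i := by
        apply mul_le_mul step2 step3 _ hgnn
        exact le_min (abs_nonneg _) hτ.le
    _ ≤ t * ∑ i, a i * m i := cheb
    _ ≤ t * ∑ i, 2 * g (x i) := by
        apply mul_le_mul_of_nonneg_left _ (Nat.cast_nonneg t)
        exact Finset.sum_le_sum fun i _ => step5 i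
    _ = 2 * t * ∑ i, g (x i) := by rw [Finset.mul_sum, Finset.mul_sum]; apply Finset.sum_congr rfl; intros; ring
end

section
/- Let M* be an n×(k+1) real matrix of rank k. Then there exist a subset P ⊆ [k+1] of size k, an index i ∈ [k+1] \ P, and a vector x ∈ ℝ^k with ‖x‖_∞ ≤ 1 such that the column M*_i equals the linear combination of the columns indexed by P with coefficients x. -/
/-!
The k + 1 columns of a rank-k matrix are linearly dependent. In a nontrivial relation
∑ c j • v j = 0, solve for the column i whose coefficient has the largest absolute value:
v i = ∑_{j ≠ i} (-c j / c i) • v j, and every coefficient -c j / c i has absolute value at most 1.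
-/

open Finset

theorem exists_eq_sum_erase_smul_abs_le_one_of_not_linearIndependent
    {ι K V : Type*} [Fintype ι] [DecidableEq ι] [Field K] [LinearOrder K] [IsStrictOrderedRing K]
    [AddCommGroup V] [Module K V] {v : ι → V} (hv : ¬LinearIndependent K v) :
    ∃ i : ι, ∃ x : ι → K, (∀ j, |x j| ≤ 1) ∧ v i = ∑ j ∈ univ.erase i, x j • v j := by
  obtain ⟨c, hc, j₀, hcj₀⟩ := Fintype.not_linearIndependent_iff.mp hv
  have : Nonempty ι := ⟨j₀⟩
  obtain ⟨i, hi⟩ := Finite.exists_max fun j => |c j|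
  have hci : c i ≠ 0 := abs_pos.mp ((abs_pos.mpr hcj₀).trans_le (hi j₀))
  refine ⟨i, fun j => -c j / c i, fun j => ?_, ?_⟩
  · rw [abs_div, abs_neg, div_le_one (abs_pos.mpr hci)]
    exact hi j
  · have hrest : ∑ j ∈ univ.erase i, c j • v j = -(c i • v i) := by
      rw [← add_sum_erase _ _ (mem_univ i)] at hc
      exact eq_neg_of_add_eq_zero_right hc
    simp_rw [div_eq_mul_inv, neg_mul, neg_smul, mul_comm (c _), mul_smul, sum_neg_distrib,
      ← smul_sum, hrest, smul_neg, neg_neg, inv_smul_smul₀ hci]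

theorem Matrix.not_linearIndependent_col_of_rank_lt {m n K : Type*} [Fintype m] [Fintype n]
    [Field K] {M : Matrix m n K} (hM : M.rank < Fintype.card n) :
    ¬LinearIndependent K M.col := fun h => by
  rw [← row_transpose] at h
  exact hM.ne (rank_transpose M ▸ h.rank_matrix)

theorem stmt_5 (n k : ℕ) (M : Matrix (Fin n) (Fin (k + 1)) ℝ)
    (hrank : M.rank = k) :
    ∃ P : Finset (Fin (k + 1)), P.card = k ∧
      ∃ i : Fin (k + 1), i ∉ P ∧
        ∃ x : Fin (k + 1) → ℝ, (∀ j, |x j| ≤ 1) ∧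
          ∀ r : Fin n, M r i = ∑ j ∈ P, x j * M r j := by
  have hdep : ¬LinearIndependent ℝ M.col :=
    Matrix.not_linearIndependent_col_of_rank_lt (by simp [hrank])
  obtain ⟨i, x, hx, hcol⟩ := exists_eq_sum_erase_smul_abs_le_one_of_not_linearIndependent hdep
  refine ⟨univ.erase i, by simp, i, notMem_erase i _, x, hx, fun r => ?_⟩
  simpa [Finset.sum_apply] using congrFun hcol r
end

section
/- Let g : ℝ → ℝ_{≥0} satisfy the ati_{g,s+1}-approximate triangle inequality and be mon_g-monotone. Let M = M* + N where M*, N ∈ ℝ^{n×m}, let H ⊆ [m] with |H| = s, and let i ∈ [m] \ H. Suppose there exist coefficients α_1, ..., α_s with |α_j| ≤ 1 for all j such that M*_i = Σ_j α_j (M*_H)_j. Then min over x ∈ ℝ^s of ‖M_H x − M_i‖_g is at most ati_{g,s+1} · mon_g · (‖N_i‖_g + Σ_{j=1}^{s} ‖(N_H)_j‖_g). -/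
theorem stmt_7 (n m s : ℕ)
    (g : ℝ → ℝ) (hg0 : ∀ x, 0 ≤ g x)
    (ati mon : ℝ)
    (hati : ∀ x : Fin (s + 1) → ℝ, g (∑ j, x j) ≤ ati * ∑ j, g (x j))
    (hmon : ∀ x y : ℝ, |x| ≤ |y| → g x ≤ mon * g y)
    (Mstar N : Matrix (Fin n) (Fin m) ℝ)
    (M : Matrix (Fin n) (Fin m) ℝ) (hM : M = Mstar + N)
    (H : Fin s → Fin m) (hH : Function.Injective H)
    (i : Fin m) (hi : ∀ j, i ≠ H j)
    (α : Fin s → ℝ) (hα : ∀ j, |α j| ≤ 1)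
    (hcomb : ∀ r : Fin n, Mstar r i = ∑ j, α j * Mstar r (H j)) :
    ∃ x : Fin s → ℝ,
      ∑ r, g ((∑ j, x j * M r (H j)) - M r i) ≤
        ati * mon * ((∑ r, g (N r i)) + ∑ j, ∑ r, g (N r (H j))) := by
  subst hM
  refine ⟨α, ?_⟩
  by_cases hz : ∀ x, g x = 0
  · simp [hz]
  · push_neg at hz
    obtain ⟨x0, hx0⟩ := hz
    have hx0' : 0 < g x0 := lt_of_le_of_ne (hg0 x0) (Ne.symm hx0)
    have hati0 : 0 ≤ ati := by
      have h := hati (Fin.cons x0 0)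
      simp [Fin.sum_univ_succ] at h
      nlinarith [mul_nonneg (Nat.cast_nonneg (α := ℝ) s) (hg0 0), hx0']
    have hmon0 : 0 ≤ mon := by
      have h := hmon x0 x0 le_rfl
      nlinarith
    have key : ∀ r, g ((∑ j, α j * (Mstar + N) r (H j)) - (Mstar + N) r i)
        ≤ ati * (mon * g (N r i) + ∑ j, mon * g (N r (H j))) := by
      intro r
      have harg : (∑ j, α j * (Mstar + N) r (H j)) - (Mstar + N) r i
          = ∑ j : Fin (s+1), Fin.cons (-(N r i)) (fun j => α j * N r (H j)) j := by
        rw [Fin.sum_cons]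
        simp only [Matrix.add_apply, mul_add, Finset.sum_add_distrib, hcomb r]
        ring
      rw [harg]
      refine (hati _).trans ?_
      apply mul_le_mul_of_nonneg_left _ hati0
      rw [Fin.sum_univ_succ]
      simp only [Fin.cons_zero, Fin.cons_succ]
      refine add_le_add (hmon _ _ (by rw [abs_neg])) (Finset.sum_le_sum fun j _ => ?_)
      refine hmon _ _ ?_
      rw [abs_mul]
      calc |α j| * |N r (H j)| ≤ 1 * |N r (H j)| :=
            mul_le_mul_of_nonneg_right (hα j) (abs_nonneg _)
        _ = |N r (H j)| := one_mul _
    calc ∑ r, g ((∑ j, α j * (Mstar + N) r (H j)) - (Mstar + N) r i)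
        ≤ ∑ r, ati * (mon * g (N r i) + ∑ j, mon * g (N r (H j))) :=
          Finset.sum_le_sum fun r _ => key r
      _ = ati * mon * ((∑ r, g (N r i)) + ∑ j, ∑ r, g (N r (H j))) := by
          simp only [mul_add, Finset.mul_sum, Finset.sum_add_distrib, mul_assoc]
          rw [Finset.sum_comm (s := (Finset.univ : Finset (Fin n)))
            (f := fun r j => ati * (mon * g (N r (H j))))]
end

section
/- Let a_1 ≥ ... ≥ a_m ≥ 0 with m ≥ 1000k and suppose H is a uniformly random subset of [m] of size 2k. Then with probability at least 19/20, Σ_{j ∈ H} a_j ≤ 400·(k/m)·Σ_{j = ⌈m/(100k)⌉}^{m} a_j. -/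
/-!
Call `j` a head index if `(j + 1) * 100k < m`; there are at most `m / (100k)` of them. Each index
lies in a uniformly random `2k`-subset `H` with probability `2k / m`, so by the union bound `H`
contains a head index with probability at most `1/50`. A uniformly random `2k`-subset of the
tail `T` has expected mass `2k / #T` times the tail mass `S`, so by Markov's inequality its mass
exceeds `(400k / m) S` with probability at most `m / (200 #T) ≤ 1/198`, since `#T ≥ 99m/100`.
-/

open Finset

section RandomSubset

variable {α : Type*} [DecidableEq α] {s : Finset α}

theorem card_mul_card_filter_powersetCard_mem {j : α} (hj : j ∈ s) (r : ℕ) :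
    #s * #{H ∈ s.powersetCard r | j ∈ H} = r * #(s.powersetCard r) := by
  cases r with
  | zero => simp
  | succ n =>
    have h := card_filter_powersetCard_subset {j} s (n + 1) (singleton_subset_iff.2 hj) (by simp)
    simp only [singleton_subset_iff, card_singleton, add_tsub_cancel_right] at h
    obtain ⟨t, ht⟩ := Nat.exists_eq_add_of_lt (card_pos.2 ⟨j, hj⟩)
    rw [h, card_powersetCard, ht, zero_add, add_tsub_cancel_right, Nat.add_one_mul_choose_eq,
      mul_comm]

theorem card_mul_sum_powersetCard_sum {R : Type*} [CommSemiring R] (f : α → R) (r : ℕ) :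
    #s * ∑ H ∈ s.powersetCard r, ∑ j ∈ H, f j = r * #(s.powersetCard r) * ∑ j ∈ s, f j := by
  have hswap : ∑ H ∈ s.powersetCard r, ∑ j ∈ H, f j
      = ∑ j ∈ s, #{H ∈ s.powersetCard r | j ∈ H} * f j := by
    rw [sum_comm' (t' := s) (s' := fun j => {H ∈ s.powersetCard r | j ∈ H})]
    · simp only [sum_const, nsmul_eq_mul]
    · intro H j
      simp only [mem_filter, mem_powersetCard]
      exact ⟨fun h => ⟨⟨h.1, h.2⟩, h.1.1 h.2⟩, fun h => ⟨h.1.1, h.1.2⟩⟩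
  rw [hswap, mul_sum, mul_sum]
  refine sum_congr rfl fun j hj => ?_
  rw [← mul_assoc, ← Nat.cast_mul, card_mul_card_filter_powersetCard_mem hj]
  push_cast
  ring

theorem card_mul_card_filter_powersetCard_not_subset_le (T : Finset α) (r : ℕ) :
    #s * #{H ∈ s.powersetCard r | ¬H ⊆ T} ≤ r * #(s \ T) * #(s.powersetCard r) := by
  have hcover : {H ∈ s.powersetCard r | ¬H ⊆ T}
      ⊆ (s \ T).biUnion fun j => {H ∈ s.powersetCard r | j ∈ H} := by
    intro H hH
    obtain ⟨hHs, hHT⟩ := mem_filter.1 hH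
    obtain ⟨j, hjH, hjT⟩ := not_subset.1 hHT
    exact mem_biUnion.2 ⟨j, mem_sdiff.2 ⟨(mem_powersetCard.1 hHs).1 hjH, hjT⟩,
      mem_filter.2 ⟨hHs, hjH⟩⟩
  calc #s * #{H ∈ s.powersetCard r | ¬H ⊆ T}
      ≤ #s * ∑ j ∈ s \ T, #{H ∈ s.powersetCard r | j ∈ H} :=
        Nat.mul_le_mul_left _ ((card_le_card hcover).trans card_biUnion_le)
    _ = ∑ j ∈ s \ T, r * #(s.powersetCard r) := by
        rw [mul_sum]
        exact sum_congr rfl fun j hj =>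
          card_mul_card_filter_powersetCard_mem (mem_sdiff.1 hj).1 r
    _ = r * #(s \ T) * #(s.powersetCard r) := by rw [sum_const, smul_eq_mul]; ring

/-- Markov: a uniformly random `r`-subset of `s` carries more than `c` times the total mass of `s`
with probability at most `r / (c * #s)`. -/
theorem mul_card_mul_card_filter_powersetCard_lt_sum_le {f : α → ℝ} (hf : ∀ j ∈ s, 0 ≤ f j)
    (c : ℝ) (r : ℕ) :
    c * #s * #{H ∈ s.powersetCard r | c * ∑ j ∈ s, f j < ∑ j ∈ H, f j}
      ≤ r * #(s.powersetCard r) := by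
  set S := ∑ j ∈ s, f j
  have hmass : ∀ H ∈ s.powersetCard r, ∑ j ∈ H, f j ≤ S := fun H hH =>
    sum_le_sum_of_subset_of_nonneg (mem_powersetCard.1 hH).1 fun j hj _ => hf j hj
  rcases (show 0 ≤ S from sum_nonneg hf).eq_or_lt with hS | hS
  · have hempty : {H ∈ s.powersetCard r | c * S < ∑ j ∈ H, f j} = ∅ :=
      filter_eq_empty_iff.2 fun H hH hlt => by
        have := hmass H hH
        rw [← hS, mul_zero] at hlt
        linarith
    rw [hempty, card_empty, Nat.cast_zero, mul_zero]
    positivity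
  · refine le_of_mul_le_mul_right ?_ hS
    calc c * #s * #{H ∈ s.powersetCard r | c * S < ∑ j ∈ H, f j} * S
        = #s * (#{H ∈ s.powersetCard r | c * S < ∑ j ∈ H, f j} • (c * S)) := by
          rw [nsmul_eq_mul]; ring
      _ ≤ #s * ∑ H ∈ {H ∈ s.powersetCard r | c * S < ∑ j ∈ H, f j}, ∑ j ∈ H, f j := by
          gcongr
          exact card_nsmul_le_sum _ _ _ fun H hH => (mem_filter.1 hH).2.le
      _ ≤ #s * ∑ H ∈ s.powersetCard r, ∑ j ∈ H, f j := by
          gcongr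
          · exact fun H hH _ => sum_nonneg fun j hj => hf j ((mem_powersetCard.1 hH).1 hj)
          · exact filter_subset _ _
      _ = r * #(s.powersetCard r) * S := card_mul_sum_powersetCard_sum f r

theorem card_filter_powersetCard_lt_sum_le {T : Finset α} {f : α → ℝ} (hTs : T ⊆ s)
    (hT : T.Nonempty) (hf : ∀ j ∈ T, 0 ≤ f j) {c : ℝ} (hc : 0 < c) (r : ℕ) :
    (#{H ∈ s.powersetCard r | c * ∑ j ∈ T, f j < ∑ j ∈ H, f j} : ℝ)
      ≤ (r * #(s \ T) / #s + r / (c * #T)) * #(s.powersetCard r) := by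
  have hs : (0 : ℝ) < #s := by exact_mod_cast (hT.mono hTs).card_pos
  have hTpos : (0 : ℝ) < c * #T := mul_pos hc (by exact_mod_cast hT.card_pos)
  have hcover : {H ∈ s.powersetCard r | c * ∑ j ∈ T, f j < ∑ j ∈ H, f j}
      ⊆ {H ∈ s.powersetCard r | ¬H ⊆ T}
        ∪ {H ∈ T.powersetCard r | c * ∑ j ∈ T, f j < ∑ j ∈ H, f j} := by
    intro H hH
    obtain ⟨hHs, hlt⟩ := mem_filter.1 hH
    by_cases hHT : H ⊆ T
    · exact mem_union_right _
        (mem_filter.2 ⟨mem_powersetCard.2 ⟨hHT, (mem_powersetCard.1 hHs).2⟩, hlt⟩)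
    · exact mem_union_left _ (mem_filter.2 ⟨hHs, hHT⟩)
  have hhit : (#{H ∈ s.powersetCard r | ¬H ⊆ T} : ℝ)
      ≤ r * #(s \ T) / #s * #(s.powersetCard r) := by
    rw [div_mul_eq_mul_div, le_div_iff₀ hs, mul_comm]
    exact_mod_cast card_mul_card_filter_powersetCard_not_subset_le T r
  have hmarkov : (#{H ∈ T.powersetCard r | c * ∑ j ∈ T, f j < ∑ j ∈ H, f j} : ℝ)
      ≤ r / (c * #T) * #(s.powersetCard r) := by
    rw [div_mul_eq_mul_div, le_div_iff₀ hTpos, mul_comm]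
    calc c * #T * (#{H ∈ T.powersetCard r | c * ∑ j ∈ T, f j < ∑ j ∈ H, f j} : ℝ)
        ≤ r * #(T.powersetCard r) := mul_card_mul_card_filter_powersetCard_lt_sum_le hf c r
      _ ≤ r * #(s.powersetCard r) := by gcongr; exact powersetCard_mono hTs
  calc (#{H ∈ s.powersetCard r | c * ∑ j ∈ T, f j < ∑ j ∈ H, f j} : ℝ)
      ≤ #{H ∈ s.powersetCard r | ¬H ⊆ T}
          + #{H ∈ T.powersetCard r | c * ∑ j ∈ T, f j < ∑ j ∈ H, f j} := by
        exact_mod_cast (card_le_card hcover).trans (card_union_le _ _)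
    _ ≤ _ := by rw [add_mul]; exact add_le_add hhit hmarkov

end RandomSubset

theorem Fin.card_filter_succ_mul_le_mul_le (m d : ℕ) :
    #{j : Fin m | (j + 1) * d ≤ m} * d ≤ m := by
  rcases Nat.eq_zero_or_pos d with rfl | hd
  · simp
  have hle : #{j : Fin m | (j + 1) * d ≤ m} ≤ m / d := by
    simpa using card_le_card_of_injOn (t := range (m / d)) (fun j : Fin m => (j : ℕ))
      (fun j hj => by
        rw [coe_filter, Set.mem_ofPred_eq] at hj
        exact mem_coe.2 (mem_range.2 ((Nat.le_div_iff_mul_le hd).2 hj.2)))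
      Fin.val_injective.injOn
  calc #{j : Fin m | (j + 1) * d ≤ m} * d ≤ m / d * d := Nat.mul_le_mul_right _ hle
    _ ≤ m := Nat.div_mul_le_self m d

theorem head_term_add_markov_term_le {k m x t : ℝ} (hk : 1 ≤ k) (hm : 0 < m)
    (hxt : x + t = m) (hx : x * (100 * k) ≤ m) :
    2 * k * x / m + 2 * k / (400 * (k / m) * t) ≤ 1 / 20 := by
  have ht : 99 * m ≤ 100 * t := by nlinarith
  have hhead : 2 * k * x / m ≤ 1 / 50 := by
    rw [div_le_iff₀ hm]; nlinarith
  have hkt : 99 * k ≤ 100 * (k / m * t) := by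
    rw [div_mul_eq_mul_div, mul_div_assoc', le_div_iff₀ hm]; nlinarith
  have hmarkov : 2 * k / (400 * (k / m) * t) ≤ 1 / 198 := by
    rw [div_le_iff₀ (by nlinarith)]; linarith
  linarith

theorem stmt_10_general (k m : ℕ) (hk : 1 ≤ k) (hm : 1000 * k ≤ m)
    (a : Fin m → ℝ) (ha0 : ∀ j, 0 ≤ a j) :
    (((Finset.univ.powersetCard (2 * k)).filter (fun H : Finset (Fin m) =>
        ∑ j ∈ H, a j ≤ 400 * ((k : ℝ) / m) *
          ∑ j' ∈ Finset.univ.filter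
            (fun j' : Fin m => (m : ℝ) ≤ ((j' : ℕ) + 1 : ℝ) * (100 * k)), a j')).card : ℝ)
      ≥ (19 / 20) * ((Finset.univ.powersetCard (2 * k) : Finset (Finset (Fin m))).card : ℝ) := by
  set T : Finset (Fin m) := {j' | (m : ℝ) ≤ ((j' : ℕ) + 1 : ℝ) * (100 * k)}
  have hhead : #(univ \ T) * (100 * k) ≤ m := by
    refine (Nat.mul_le_mul_right _ (card_le_card fun j hj => ?_)).trans
      (Fin.card_filter_succ_mul_le_mul_le m (100 * k))
    simp only [T, mem_sdiff, mem_univ, mem_filter, true_and, not_le] at hj ⊢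
    exact_mod_cast hj.le
  have hsplit : #(univ \ T) + #T = m := by
    rw [card_sdiff_add_card_eq_card (subset_univ T), card_univ, Fintype.card_fin]
  have hT : T.Nonempty := card_pos.1 (by nlinarith)
  have hkR : (1 : ℝ) ≤ k := by exact_mod_cast hk
  have hmR : (0 : ℝ) < m := by exact_mod_cast (show 0 < m by omega)
  have hbad := card_filter_powersetCard_lt_sum_le (subset_univ T) hT (fun j _ => ha0 j)
    (c := 400 * ((k : ℝ) / m)) (mul_pos (by norm_num) (div_pos (by linarith) hmR)) (2 * k)
  rw [card_univ, Fintype.card_fin, Nat.cast_mul, Nat.cast_two] at hbad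
  have hprob := head_term_add_markov_term_le hkR hmR (x := #(univ \ T)) (t := #T)
    (by exact_mod_cast hsplit) (by exact_mod_cast hhead)
  have hcount := congrArg (Nat.cast (R := ℝ)) (card_filter_add_card_filter_not
    (s := univ.powersetCard (2 * k))
    (fun H => ∑ j ∈ H, a j ≤ 400 * ((k : ℝ) / m) * ∑ j' ∈ T, a j'))
  simp only [not_le, Nat.cast_add] at hcount
  linarith [hbad.trans (mul_le_mul_of_nonneg_right hprob (Nat.cast_nonneg _))]

theorem stmt_10 (k m : ℕ) (hk : 1 ≤ k) (hm : 1000 * k ≤ m)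
    (a : Fin m → ℝ) (ha0 : ∀ j, 0 ≤ a j)
    (hmono : ∀ j j' : Fin m, j ≤ j' → a j' ≤ a j) :
    (((Finset.univ.powersetCard (2 * k)).filter (fun H : Finset (Fin m) =>
        ∑ j ∈ H, a j ≤ 400 * ((k : ℝ) / m) *
          ∑ j' ∈ Finset.univ.filter
            (fun j' : Fin m => (m : ℝ) ≤ ((j' : ℕ) + 1 : ℝ) * (100 * k)), a j')).card : ℝ)
      ≥ (19 / 20) * ((Finset.univ.powersetCard (2 * k) : Finset (Finset (Fin m))).card : ℝ) :=
  stmt_10_general k m hk hm a ha0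
end

section
/- Let A ∈ ℝ^{n×k} and b ∈ ℝ^n, and let x* minimize ‖Ax − b‖_0 over x ∈ ℝ^k, where ‖v‖_0 counts nonzero entries. Let {S_1, ..., S_h} be a regular partition of [n] with respect to A, meaning for each i, rank(A^{S_i}) = |S_i| and the row span of A^{S_i} equals the row span of the rows indexed by S_i ∪ S_{i+1} ∪ ... ∪ S_h. Let i be the smallest index with S_i disjoint from the error set E = {t : (Ax*)_t ≠ b_t}, and let x̃ satisfy A^{S_i} x̃ = b_{S_i}. Then ‖A x̃ − b‖_0 ≤ k · ‖A x* − b‖_0. -/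
theorem stmt_12 (n k h : ℕ)
    (A : Matrix (Fin n) (Fin k) ℝ) (b : Fin n → ℝ)
    (xstar : Fin k → ℝ)
    (hopt : ∀ x : Fin k → ℝ,
      (Finset.univ.filter (fun t => A.mulVec xstar t ≠ b t)).card ≤
        (Finset.univ.filter (fun t => A.mulVec x t ≠ b t)).card)
    (S : Fin h → Finset (Fin n))
    (hdisj : ∀ j j' : Fin h, j ≠ j' → Disjoint (S j) (S j'))
    (hcover : ∀ t : Fin n, ∃ j, t ∈ S j)
    (hindep : ∀ j : Fin h, LinearIndependent ℝ (fun t : (S j : Finset (Fin n)) => A t.val))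
    (hspan : ∀ j : Fin h,
      Submodule.span ℝ (A '' (S j : Set (Fin n))) =
        Submodule.span ℝ (A '' (⋃ j' ∈ Set.Ici j, (S j' : Set (Fin n)))))
    (i : Fin h)
    (hiE : ∀ t ∈ S i, A.mulVec xstar t = b t)
    (hfirst : ∀ j : Fin h, j < i → ∃ t ∈ S j, A.mulVec xstar t ≠ b t)
    (xt : Fin k → ℝ) (hxt : ∀ t ∈ S i, A.mulVec xt t = b t) :
    (Finset.univ.filter (fun t => A.mulVec xt t ≠ b t)).card ≤
      k * (Finset.univ.filter (fun t => A.mulVec xstar t ≠ b t)).card := by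
  classical
  have key : ∀ j : Fin h, i ≤ j → ∀ t ∈ S j, A.mulVec xt t = A.mulVec xstar t := by
    intro j hij t htj
    have hmem : A t ∈ Submodule.span ℝ (A '' (S i : Set (Fin n))) := by
      rw [hspan i]
      exact Submodule.subset_span ⟨t, Set.mem_iUnion₂.mpr ⟨j, hij, htj⟩, rfl⟩
    let f : (Fin k → ℝ) →ₗ[ℝ] ℝ :=
      { toFun := fun v => dotProduct v xt - dotProduct v xstar
        map_add' := by
          intro u v
          simp [add_dotProduct]
          ring
        map_smul' := by
          intro c v
          simp [smul_dotProduct, smul_eq_mul]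
          ring }
    have hker : Submodule.span ℝ (A '' (S i : Set (Fin n))) ≤ LinearMap.ker f := by
      rw [Submodule.span_le]
      rintro _ ⟨s, hs, rfl⟩
      have hs' : s ∈ S i := hs
      have h1 : A.mulVec xt s = b s := hxt s hs'
      have h2 : A.mulVec xstar s = b s := hiE s hs'
      have hz : dotProduct (A s) xt - dotProduct (A s) xstar = 0 := by
        show A.mulVec xt s - A.mulVec xstar s = 0
        rw [h1, h2, sub_self]
      simpa [f, LinearMap.mem_ker] using hz
    have h0 : dotProduct (A t) xt - dotProduct (A t) xstar = 0 := hker hmem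
    exact sub_eq_zero.mp h0
  have hcardS : ∀ j : Fin h, (S j).card ≤ k := by
    intro j
    have := (hindep j).fintype_card_le_finrank
    simpa [Module.finrank_fintype_fun_eq_card] using this
  have hsplit : ∀ (p : Fin n → Prop) (hp : DecidablePred p),
      (Finset.univ.filter p).card = ∑ j : Fin h, ((S j).filter p).card := by
    intro p hp
    have hU : Finset.univ.filter p = Finset.univ.biUnion (fun j => (S j).filter p) := by
      ext t
      simp only [Finset.mem_filter, Finset.mem_biUnion, Finset.mem_univ, true_and]
      constructor
      · intro hpt
        obtain ⟨j, hj⟩ := hcover t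
        exact ⟨j, hj, hpt⟩
      · rintro ⟨j, _, hpt⟩; exact hpt
    rw [hU, Finset.card_biUnion]
    intro j _ j' _ hjj'
    exact Finset.disjoint_filter_filter (hdisj j j' hjj')
  rw [hsplit (fun t => A.mulVec xt t ≠ b t) inferInstance,
    hsplit (fun t => A.mulVec xstar t ≠ b t) inferInstance, Finset.mul_sum]
  apply Finset.sum_le_sum
  intro j _
  by_cases hji : j < i
  · obtain ⟨t, ht, htne⟩ := hfirst j hji
    have h1 : 1 ≤ ((S j).filter fun t => A.mulVec xstar t ≠ b t).card :=
      Finset.card_pos.mpr ⟨t, Finset.mem_filter.mpr ⟨ht, htne⟩⟩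
    calc ((S j).filter fun t => A.mulVec xt t ≠ b t).card
        ≤ (S j).card := Finset.card_filter_le _ _
      _ ≤ k := hcardS j
      _ = k * 1 := (mul_one k).symm
      _ ≤ _ := Nat.mul_le_mul_left k h1
  · have hij : i ≤ j := not_lt.mp hji
    have heq : (S j).filter (fun t => A.mulVec xt t ≠ b t) =
        (S j).filter (fun t => A.mulVec xstar t ≠ b t) := by
      apply Finset.filter_congr
      intro t ht
      simp [key j hij t ht]
    rw [heq]
    rcases Nat.eq_zero_or_pos k with hk | hk
    · have hle : ((S j).filter fun t => A.mulVec xstar t ≠ b t).card ≤ (S j).card :=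
        Finset.card_filter_le _ _
      have := hcardS j
      omega
    · exact Nat.le_mul_of_pos_left _ hk
end

section
/- Let f_τ(x) = c if |x| > τ and f_τ(x) = 0 if |x| ≤ τ, for constants c > 0, τ = 1/4, and define ‖M‖_f = Σ_{i,j} f_τ(M_{i,j}). Suppose B ∈ ℝ^{n×n} is a matrix with ‖I_n − B‖_∞ ≤ 1/4 (such B of rank O(log n) exists by the Johnson–Lindenstrauss lemma). Then ‖I_n − B‖_f = 0, yet for every diagonal matrix D with n−1 nonzero diagonal entries and every X ∈ ℝ^{n×n}, ‖X D I_n − I_n‖_f ≥ c > 0. -/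
theorem stmt_19 (n : ℕ) (hn : 1 ≤ n) (c : ℝ) (hc : 0 < c)
    (f : ℝ → ℝ) (hf : ∀ x : ℝ, f x = if |x| ≤ 1 / 4 then 0 else c)
    (B : Matrix (Fin n) (Fin n) ℝ)
    (hB : ∀ i j, |((1 : Matrix (Fin n) (Fin n) ℝ) - B) i j| ≤ 1 / 4) :
    (∑ i, ∑ j, f (((1 : Matrix (Fin n) (Fin n) ℝ) - B) i j) = 0) ∧
    (∀ D : Matrix (Fin n) (Fin n) ℝ,
      (∀ i j : Fin n, i ≠ j → D i j = 0) →
      (Finset.univ.filter (fun i : Fin n => D i i ≠ 0)).card = n - 1 →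
      ∀ X : Matrix (Fin n) (Fin n) ℝ,
        c ≤ ∑ i, ∑ j, f ((X * D * (1 : Matrix (Fin n) (Fin n) ℝ) - 1) i j)) := by
  have hfnn : ∀ x, 0 ≤ f x := by
    intro x; rw [hf]; split <;> [rfl; exact hc.le]
  constructor
  · apply Finset.sum_eq_zero; intro i _
    apply Finset.sum_eq_zero; intro j _
    rw [hf, if_pos (hB i j)]
  · intro D hDoff hcard X
    -- find j with D j j = 0
    have : (Finset.univ.filter (fun i : Fin n => D i i ≠ 0)) ≠ Finset.univ := by
      intro h
      rw [h, Finset.card_univ, Fintype.card_fin] at hcard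
      omega
    obtain ⟨j, hj⟩ : ∃ j : Fin n, D j j = 0 := by
      by_contra h
      push_neg at h
      exact this (Finset.eq_univ_iff_forall.mpr (fun i => Finset.mem_filter.mpr ⟨Finset.mem_univ i, h i⟩))
    have hentry : (X * D * (1 : Matrix (Fin n) (Fin n) ℝ) - 1) j j = -1 := by
      have hXD : (X * D) j j = 0 := by
        simp only [Matrix.mul_apply]
        apply Finset.sum_eq_zero
        intro k _
        rcases eq_or_ne k j with rfl | hkj
        · simp [hj]
        · simp [hDoff k j hkj]
      simp [Matrix.mul_one, Matrix.sub_apply, hXD, Matrix.one_apply]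
    have hterm : f ((X * D * (1 : Matrix (Fin n) (Fin n) ℝ) - 1) j j) = c := by
      rw [hentry, hf]; norm_num
    calc c = f ((X * D * (1 : Matrix (Fin n) (Fin n) ℝ) - 1) j j) := hterm.symm
      _ ≤ ∑ j', f ((X * D * (1 : Matrix (Fin n) (Fin n) ℝ) - 1) j j') :=
          Finset.single_le_sum (fun k _ => hfnn _) (Finset.mem_univ j)
      _ ≤ ∑ i, ∑ j', f ((X * D * (1 : Matrix (Fin n) (Fin n) ℝ) - 1) i j') :=
          Finset.single_le_sum (fun i _ => Finset.sum_nonneg (fun k _ => hfnn _)) (Finset.mem_univ j)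
end
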